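/- arXiv:2002.09456 — 9 statements merged into one kernel-verified Lean document; each statement's English description precedes it below -/
import Mathlib

section
/- Let φ_t be a continuous flow on a compact metric space X, μ a Borel probability measure on X invariant under φ_t, and A ⊂ X a Borel set. Then for every T > 0, μ(A) ≤ (1/T)·|{t ∈ [0,T] : φ_t(A) ∩ A ≠ ∅}|, where |·| denotes Lebesgue measure on ℝ. -/
open MeasureTheory Set Filter Topology

/- For fixed `x`, let `R_x = {t ∈ [0, T] | φ_{-t} x ∈ A}`. Any `s ≤ t` in `R_x` give a return time
`t - s`, since `φ_{t-s}` maps `φ_{-t} x ∈ A` to `φ_{-s} x ∈ A`; translating `R_x` by an element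
close to its infimum therefore puts it, up to `ε`, inside the set of return times. Integrating
`|R_x|` against `μ` and using Fubini on `[0, T] × X` with the invariance of `μ` turns the left
side into `T μ(A)`. -/

lemma Real.volume_le_of_forall_sub_mem {R S : Set ℝ} (hR : BddBelow R)
    (hRS : ∀ s ∈ R, ∀ t ∈ R, s ≤ t → t - s ∈ S) : volume R ≤ volume S := by
  rcases R.eq_empty_or_nonempty with rfl | hne
  · simp
  refine ENNReal.le_of_forall_pos_le_add fun ε hε _ => ?_
  obtain ⟨t₀, ht₀, ht₀_lt⟩ := Real.lt_sInf_add_pos hne (NNReal.coe_pos.mpr hε)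
  have hcover : R ⊆ Ico (sInf R) t₀ ∪ (fun t => t + -t₀) ⁻¹' S := by
    intro t ht
    rcases lt_or_ge t t₀ with hlt | hle
    · exact Or.inl ⟨csInf_le hR ht, hlt⟩
    · exact Or.inr (hRS t₀ ht₀ t ht hle)
  calc volume R ≤ volume (Ico (sInf R) t₀) + volume ((fun t => t + -t₀) ⁻¹' S) :=
        (measure_mono hcover).trans (measure_union_le _ _)
    _ = ENNReal.ofReal (t₀ - sInf R) + volume S := by
        rw [Real.volume_Ico, measure_preimage_add_right]
    _ ≤ ε + volume S := by
        gcongr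
        exact (ENNReal.ofReal_le_ofReal (by linarith)).trans ENNReal.ofReal_coe_nnreal.le
    _ = volume S + ε := add_comm _ _

namespace Flow

variable {X : Type*} [TopologicalSpace X]

def returnTimes (φ : Flow ℝ X) (A : Set X) (T : ℝ) : Set ℝ :=
  {t | t ∈ Icc 0 T ∧ (φ t '' A ∩ A).Nonempty}

lemma volume_visitTimes_le_returnTimes (φ : Flow ℝ X) (A : Set X) (T : ℝ) (x : X) :
    volume ((fun t => φ (-t) x) ⁻¹' A ∩ Icc 0 T) ≤ volume (φ.returnTimes A T) := by
  refine Real.volume_le_of_forall_sub_mem ⟨0, fun t ht => ht.2.1⟩ ?_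
  rintro s ⟨hsA, hs₀, hsT⟩ t ⟨htA, ht₀, htT⟩ hst
  refine ⟨⟨by linarith, by linarith⟩, φ (-s) x, ⟨φ (-t) x, htA, ?_⟩, hsA⟩
  rw [← φ.map_add, show t - s + -t = -s by ring]

variable [MeasurableSpace X] [BorelSpace X]

lemma ofReal_mul_measure_le_volume_returnTimes (φ : Flow ℝ X) (μ : Measure X)
    [IsProbabilityMeasure μ] (hinv : ∀ t : ℝ, μ.map (φ t) = μ) {A : Set X}
    (hA : MeasurableSet A) (T : ℝ) :
    ENNReal.ofReal T * μ A ≤ volume (φ.returnTimes A T) := by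
  set ν : Measure ℝ := volume.restrict (Icc 0 T)
  have hflow : Continuous fun p : ℝ × X => φ (-p.1) p.2 :=
    φ.continuous continuous_fst.neg continuous_snd
  set E : Set (ℝ × X) := (fun p => φ (-p.1) p.2) ⁻¹' A
  have hE : MeasurableSet E := hflow.measurable hA
  have htime_slice (t : ℝ) : μ (Prod.mk t ⁻¹' E) = μ A := by
    rw [show Prod.mk t ⁻¹' E = φ (-t) ⁻¹' A from rfl,
      ← Measure.map_apply (φ.continuous_toFun (-t)).measurable hA, hinv]
  have hspace_slice (x : X) : ν ((fun t => (t, x)) ⁻¹' E) ≤ volume (φ.returnTimes A T) := by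
    rw [Measure.restrict_apply (hE.preimage measurable_prodMk_right)]
    exact φ.volume_visitTimes_le_returnTimes A T x
  calc ENNReal.ofReal T * μ A = ν.prod μ E := by
        simp [Measure.prod_apply hE, htime_slice, ν, mul_comm]
    _ = ∫⁻ x, ν ((fun t => (t, x)) ⁻¹' E) ∂μ := Measure.prod_apply_symm hE
    _ ≤ ∫⁻ _, volume (φ.returnTimes A T) ∂μ := lintegral_mono hspace_slice
    _ = volume (φ.returnTimes A T) := by simp

end Flow

theorem stmt_0_general {X : Type*} [MetricSpace X]
    [MeasurableSpace X] [BorelSpace X]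
    (φ : Flow ℝ X) (μ : Measure X) [IsProbabilityMeasure μ]
    (hinv : ∀ t : ℝ, μ.map (φ.toFun t) = μ)
    (A : Set X) (hA : MeasurableSet A)
    (T : ℝ) (hT : 0 < T) :
    μ A ≤ ENNReal.ofReal (1 / T) *
      volume {t : ℝ | t ∈ Icc (0 : ℝ) T ∧ (φ.toFun t '' A ∩ A).Nonempty} := by
  calc μ A = ENNReal.ofReal (1 / T) * (ENNReal.ofReal T * μ A) := by
        rw [← mul_assoc, ← ENNReal.ofReal_mul (by positivity), one_div_mul_cancel hT.ne',
          ENNReal.ofReal_one, one_mul]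
    _ ≤ ENNReal.ofReal (1 / T) * volume (φ.returnTimes A T) := by
        gcongr
        exact φ.ofReal_mul_measure_le_volume_returnTimes μ hinv hA T

/-- For a continuous flow `φ` on a compact metric space `X`,
an invariant Borel probability measure `μ`, and a Borel set `A`, for every `T > 0`,
`μ(A) ≤ (1/T) · |{t ∈ [0,T] : φ_t(A) ∩ A ≠ ∅}|`. -/
theorem stmt_0 {X : Type*} [MetricSpace X] [CompactSpace X]
    [MeasurableSpace X] [BorelSpace X]
    (φ : Flow ℝ X) (μ : Measure X) [IsProbabilityMeasure μ]
    (hinv : ∀ t : ℝ, μ.map (φ.toFun t) = μ)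
    (A : Set X) (hA : MeasurableSet A)
    (T : ℝ) (hT : 0 < T) :
    μ A ≤ ENNReal.ofReal (1 / T) *
      volume {t : ℝ | t ∈ Icc (0 : ℝ) T ∧ (φ.toFun t '' A ∩ A).Nonempty} :=
  stmt_0_general φ μ hinv A hA T hT
end

section
/- Let φ_t be a continuous flow on a compact metric space X, μ a φ_t-invariant Borel probability measure, and S ⊂ X a closed set. Define T_S(x) = inf{t > 0 : φ_t(x) ∈ S} (with inf ∅ = +∞). Then the restriction of μ to S gives zero mass to the set {x ∈ S : T_S(x) > 0}; that is, μ({x ∈ S : T_S(x) > 0}) = 0. -/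
open MeasureTheory Set Filter Topology

/-- The first positive hitting time of the set `S` under the flow `φ`,
`T_S(x) = inf {t > 0 : φ_t(x) ∈ S}`, with `inf ∅ = +∞` (valued in `ℝ≥0∞`). -/
noncomputable def firstReturnTime {X : Type*} [TopologicalSpace X]
    (φ : Flow ℝ X) (S : Set X) (x : X) : ENNReal :=
  sInf (ENNReal.ofReal '' {t : ℝ | 0 < t ∧ φ.toFun t x ∈ S})

/-!
A point of `S` with positive return time `T_S` does not come back to `S` within some time
`δ = 1/(n+1)`; call the set of such points `A_δ`. Two visits of an orbit to `A_δ` are more than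
`δ` apart in time, so the translates `φ_s⁻¹ A_δ`, `0 ≤ s < δ`, are pairwise disjoint. By invariance
they all have measure `μ A_δ`, and an s-finite measure cannot carry uncountably many disjoint sets
of positive measure; hence `μ A_δ = 0`.
-/

section FirstReturn

variable {X : Type*} [TopologicalSpace X] (φ : Flow ℝ X) (S : Set X)

def noReturnSet (δ : ℝ) : Set X :=
  {x | x ∈ S ∧ ∀ t ∈ Ioc 0 δ, φ t x ∉ S}

theorem noReturnSet_antitone : Antitone (noReturnSet φ S) :=
  fun _ _ hδ _ hx => ⟨hx.1, fun t ht => hx.2 t ⟨ht.1, ht.2.trans hδ⟩⟩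

variable {φ S}

theorem firstReturnTime_le_ofReal {x : X} {t : ℝ} (ht : 0 < t) (hx : φ t x ∈ S) :
    firstReturnTime φ S x ≤ ENNReal.ofReal t :=
  sInf_le ⟨t, ⟨ht, hx⟩, rfl⟩

theorem mem_noReturnSet_of_ofReal_lt_firstReturnTime {x : X} {δ : ℝ} (hx : x ∈ S)
    (hδ : ENNReal.ofReal δ < firstReturnTime φ S x) : x ∈ noReturnSet φ S δ :=
  ⟨hx, fun _ ht hts =>
    ((firstReturnTime_le_ofReal ht.1 hts).trans (ENNReal.ofReal_le_ofReal ht.2)).not_gt hδ⟩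

variable (φ S)

theorem setOf_pos_firstReturnTime_subset_iUnion_noReturnSet :
    {x | x ∈ S ∧ 0 < firstReturnTime φ S x} ⊆ ⋃ n : ℕ, noReturnSet φ S (1 / (n + 1)) := by
  rintro x ⟨hxS, hx⟩
  obtain ⟨r, -, hr0, hr⟩ := ENNReal.lt_iff_exists_real_btwn.1 hx
  obtain ⟨n, hn⟩ := exists_nat_one_div_lt (ENNReal.ofReal_pos.1 hr0)
  exact mem_iUnion.2
    ⟨n, noReturnSet_antitone φ S hn.le (mem_noReturnSet_of_ofReal_lt_firstReturnTime hxS hr)⟩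

theorem disjoint_preimage_noReturnSet {δ s s' : ℝ} (hss' : s < s') (hδ : s' - s ≤ δ) :
    Disjoint (φ s ⁻¹' noReturnSet φ S δ) (φ s' ⁻¹' noReturnSet φ S δ) := by
  refine disjoint_left.2 fun x hs hs' => hs.2 (s' - s) ⟨sub_pos.2 hss', hδ⟩ ?_
  rw [← Flow.map_add, sub_add_cancel]
  exact hs'.1

/-- Projection along the compact factor `K` is a closed map. -/
theorem isClosed_setOf_exists_flow_mem {K : Set ℝ} (hK : IsCompact K) (hS : IsClosed S) :
    IsClosed {x | ∃ t ∈ K, φ t x ∈ S} := by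
  have : CompactSpace K := isCompact_iff_compactSpace.1 hK
  have hclosed : IsClosed {p : K × X | φ p.1 p.2 ∈ S} :=
    hS.preimage (φ.continuous (continuous_subtype_val.comp continuous_fst) continuous_snd)
  convert isClosedMap_snd_of_compactSpace _ hclosed using 1
  ext x
  simp

theorem measurableSet_noReturnSet [MeasurableSpace X] [OpensMeasurableSpace X]
    (hS : IsClosed S) (δ : ℝ) : MeasurableSet (noReturnSet φ S δ) := by
  have hA : noReturnSet φ S δ =
      S ∩ ⋂ n : ℕ, {x | ∃ t ∈ Icc (1 / (n + 1 : ℝ)) δ, φ t x ∈ S}ᶜ := by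
    ext x
    simp only [noReturnSet, mem_ofPred_eq, mem_inter_iff, mem_iInter, mem_compl_iff, mem_Ioc,
      mem_Icc, not_exists, not_and, and_imp]
    refine and_congr_right fun _ =>
      ⟨fun h n t hn ht => h t (Nat.one_div_pos_of_nat.trans_le hn) ht, fun h t ht htδ => ?_⟩
    obtain ⟨n, hn⟩ := exists_nat_one_div_lt ht
    exact h n t hn.le htδ
  rw [hA]
  exact hS.measurableSet.inter <| MeasurableSet.iInter fun n =>
    (isClosed_setOf_exists_flow_mem φ S isCompact_Icc hS).measurableSet.compl

end FirstReturn

theorem measure_eq_zero_of_disjoint_flow_preimage {X : Type*} [TopologicalSpace X]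
    [MeasurableSpace X] [BorelSpace X] (φ : Flow ℝ X) (μ : Measure X) [SFinite μ]
    (hinv : ∀ t : ℝ, μ.map (φ.toFun t) = μ) {A : Set X} (hA : MeasurableSet A) {δ : ℝ}
    (hδ : 0 < δ) (hdisj : ∀ s s' : ℝ, s < s' → s' - s ≤ δ → Disjoint (φ s ⁻¹' A) (φ s' ⁻¹' A)) :
    μ A = 0 := by
  by_contra hA0
  have hpreimage : ∀ s : ℝ, μ (φ s ⁻¹' A) = μ A := fun s => by
    rw [← Measure.map_apply (φ.continuous_toFun s).measurable hA, hinv]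
  have hcount := Measure.countable_meas_pos_of_disjoint_iUnion (μ := μ)
    (As := fun s : Ico 0 δ => φ s ⁻¹' A) (fun s => hA.preimage (φ.continuous_toFun s).measurable)
    (fun s s' hne => by
      rcases lt_or_gt_of_ne (Subtype.coe_ne_coe.2 hne) with h | h
      · exact hdisj s s' h (by linarith [s.2.1, s'.2.2])
      · exact (hdisj s' s h (by linarith [s'.2.1, s.2.2])).symm)
  simp only [hpreimage, pos_iff_ne_zero.2 hA0, ofPred_true, countable_univ_iff,
    countable_coe_iff] at hcount
  exact hδ.not_ge (by simpa using hcount.measure_zero volume)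

theorem stmt_1_general {X : Type*} [MetricSpace X]
    [MeasurableSpace X] [BorelSpace X]
    (φ : Flow ℝ X) (μ : Measure X) [IsProbabilityMeasure μ]
    (hinv : ∀ t : ℝ, μ.map (φ.toFun t) = μ)
    (S : Set X) (hS : IsClosed S) :
    μ {x | x ∈ S ∧ 0 < firstReturnTime φ S x} = 0 := by
  refine measure_mono_null (setOf_pos_firstReturnTime_subset_iUnion_noReturnSet φ S)
    (measure_iUnion_null fun n => ?_)
  exact measure_eq_zero_of_disjoint_flow_preimage φ μ hinv (measurableSet_noReturnSet φ S hS _)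
    Nat.one_div_pos_of_nat fun _ _ => disjoint_preimage_noReturnSet φ S

/-- For a continuous flow on a compact metric space with invariant Borel
probability measure `μ` and a closed set `S`, the set of points of `S` with positive
first return time to `S` has `μ`-measure zero. -/
theorem stmt_1 {X : Type*} [MetricSpace X] [CompactSpace X]
    [MeasurableSpace X] [BorelSpace X]
    (φ : Flow ℝ X) (μ : Measure X) [IsProbabilityMeasure μ]
    (hinv : ∀ t : ℝ, μ.map (φ.toFun t) = μ)
    (S : Set X) (hS : IsClosed S) :
    μ {x | x ∈ S ∧ 0 < firstReturnTime φ S x} = 0 :=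
  stmt_1_general φ μ hinv S hS
end

section
/- Let (M,g) be a compact Riemannian manifold, H ⊂ M a smooth embedded hypersurface, and μ an invariant probability measure for the geodesic flow φ_t on the unit cosphere bundle S*M. Then the restriction of μ to S*_H M (covectors with footpoint on H) equals the restriction of μ to S*H (unit covectors tangent to H); i.e., μ(S*_H M \ S*H) = 0. -/
open MeasureTheory Set Filter Topology
open scoped ENNReal

/-!
A point with `xn = 0` and `ξn ≠ 0` is a transversal crossing of `{xn = 0}`: along every
orbit the times spent in the bad set are zeros of `t ↦ xn (φ_t ρ)` with nonzero derivative,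
hence isolated, hence countable and Lebesgue-null. Integrating the indicator of the bad set
over `ℝ × X` in both orders, flow invariance turns one iterated integral into
`μ(bad set) · ∞` while the other vanishes, so the bad set is `μ`-null.
-/

theorem isDiscrete_setOf_eq_zero_and_ne_zero {f f' : ℝ → ℝ}
    (hf : ∀ t, HasDerivAt f (f' t) t) : IsDiscrete {t | f t = 0 ∧ f' t ≠ 0} := by
  refine isDiscrete_iff_nhdsNE.2 fun t ht => ?_
  have hleave : ∀ᶠ s in 𝓝[≠] t, f s ≠ 0 := (hf t).eventually_ne ht.2
  rw [← empty_mem_iff_bot, ← compl_inter_self {t | f t = 0 ∧ f' t ≠ 0}]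
  exact inter_mem_inf (hleave.mono fun s hs hmem => hs hmem.1) (mem_principal_self _)

theorem countable_setOf_eq_zero_and_ne_zero {f f' : ℝ → ℝ}
    (hf : ∀ t, HasDerivAt f (f' t) t) : {t | f t = 0 ∧ f' t ≠ 0}.Countable :=
  (HereditarilyLindelofSpace.isLindelof _).countable_of_isDiscrete
    (isDiscrete_setOf_eq_zero_and_ne_zero hf)

theorem measure_eq_zero_of_null_sojourn_times {X : Type*} [MeasurableSpace X]
    {φ : ℝ → X → X} (hφ : Measurable (Function.uncurry φ)) {μ : Measure X} [SFinite μ]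
    (hinv : ∀ t, μ.map (φ t) = μ) {A : Set X} (hA : MeasurableSet A)
    (hnull : ∀ x, volume {t | φ t x ∈ A} = 0) : μ A = 0 := by
  set S : Set (ℝ × X) := Function.uncurry φ ⁻¹' A
  have hS : MeasurableSet S := hφ hA
  have hslice : ∀ t, μ (Prod.mk t ⁻¹' S) = μ A := fun t =>
    (Measure.map_apply (hφ.comp measurable_prodMk_left) hA).symm.trans (congrArg (· A) (hinv t))
  have hprod : (volume.prod μ) S = μ A * ∞ := by
    rw [Measure.prod_apply hS]
    simp only [hslice, lintegral_const, Real.volume_univ]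
  have hprod_zero : (volume.prod μ) S = 0 := by
    rw [Measure.prod_apply_symm hS]
    have hslice' : ∀ x, volume ((fun t => (t, x)) ⁻¹' S) = 0 := hnull
    simp only [hslice', lintegral_zero]
  simpa [hprod_zero, eq_comm] using hprod

-- `xn` is the signed normal (Fermi) coordinate of `H` and `ξn` the dual normal momentum, so
-- `S*_H M = {xn = 0}` and `S*H = {xn = 0, ξn = 0}`.
theorem stmt_3_general {X : Type*} [MetricSpace X]
    [MeasurableSpace X] [BorelSpace X]
    (φ : Flow ℝ X) (μ : Measure X) [IsProbabilityMeasure μ]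
    (hinv : ∀ t : ℝ, μ.map (φ.toFun t) = μ)
    (xn ξn : X → ℝ) (hxn : Continuous xn) (hξn : Continuous ξn)
    (hderiv : ∀ (ρ : X) (t : ℝ),
      HasDerivAt (fun s : ℝ => xn (φ.toFun s ρ)) (2 * ξn (φ.toFun t ρ)) t) :
    μ {ρ : X | xn ρ = 0 ∧ ξn ρ ≠ 0} = 0 := by
  have hφ : Measurable (Function.uncurry φ.toFun) :=
    measurable_uncurry_of_continuous_of_measurable
      (fun ρ => φ.continuous continuous_id continuous_const)
      fun t => (φ.continuous_toFun t).measurable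
  have hA : MeasurableSet {ρ : X | xn ρ = 0 ∧ ξn ρ ≠ 0} :=
    (measurableSet_eq_fun hxn.measurable measurable_const).inter
      (measurableSet_eq_fun hξn.measurable measurable_const).compl
  refine measure_eq_zero_of_null_sojourn_times hφ hinv hA fun ρ => ?_
  refine ((countable_setOf_eq_zero_and_ne_zero (hderiv ρ)).mono ?_).measure_zero _
  exact fun t ⟨hzero, hne⟩ => ⟨hzero, mul_ne_zero two_ne_zero hne⟩

/-- Abstract model of the geodesic flow on the unit cosphere bundle `X = S*M`
of a compact Riemannian manifold, near a hypersurface `H`.  `xn` is the (Fermi) signed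
normal coordinate and `ξn` the dual normal momentum, so that
`S*_H M = {xn = 0}` and `S*H = {xn = 0, ξn = 0}`; along the geodesic flow
`d/dt xn(φ_t ρ) = 2 ξn(φ_t ρ)`.  For any flow-invariant Borel probability measure `μ`,
the restriction of `μ` to `S*_H M` equals its restriction to `S*H`, i.e.
`μ(S*_H M \ S*H) = 0`. -/
theorem stmt_3 {X : Type*} [MetricSpace X] [CompactSpace X]
    [MeasurableSpace X] [BorelSpace X]
    (φ : Flow ℝ X) (μ : Measure X) [IsProbabilityMeasure μ]
    (hinv : ∀ t : ℝ, μ.map (φ.toFun t) = μ)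
    (xn ξn : X → ℝ) (hxn : Continuous xn) (hξn : Continuous ξn)
    (hderiv : ∀ (ρ : X) (t : ℝ),
      HasDerivAt (fun s : ℝ => xn (φ.toFun s ρ)) (2 * ξn (φ.toFun t ρ)) t) :
    μ {ρ : X | xn ρ = 0 ∧ ξn ρ ≠ 0} = 0 :=
  stmt_3_general φ μ hinv xn ξn hxn hξn hderiv
end

section
/- Let (M,g) be a compact Riemannian manifold, H a smooth embedded hypersurface with Fermi normal coordinate x_n (signed distance to H), p(x,ξ) = |ξ|²_g, and μ an invariant probability measure of the geodesic flow. For k ≥ 0 let G^k = {ρ ∈ S*_H M : (H_p^k x_n)(ρ) ≠ 0 and (H_p^j x_n)(ρ) = 0 for all j < k}, where H_p is the Hamilton vector field of p. Then μ(⋃_{k=0}^∞ G^k) = 0; in particular, μ restricted to S*_H M is supported on points where the geodesic is tangent to H to infinite order. -/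
/-!
If the first non-vanishing derivative of `xn` along the flow at `ρ ∈ {xn = 0}` has order `k`,
the mean value theorem shows that the orbit leaves `{xn = 0}` at once, so `ρ` has no return to
`{xn = 0}` before some rational time `c > 0`. The set `S_c` of such points is wandering: its
translates by the times `c / (i + 1)` are pairwise disjoint and, by invariance, all have measure
`μ S_c`, which therefore vanishes since `μ` is finite. Rational times keep `S_c` measurable.
-/

open MeasureTheory Set Filter Topology

theorem eventually_nhdsGT_ne_zero_of_hasDerivAt_succ {g : ℕ → ℝ → ℝ}
    (hg : ∀ k t, HasDerivAt (g k) (g (k + 1) t) t) {a : ℝ} {k : ℕ}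
    (hk : g k a ≠ 0) (hlt : ∀ j < k, g j a = 0) :
    ∀ᶠ t in 𝓝[>] a, g 0 t ≠ 0 := by
  induction k generalizing g with
  | zero =>
    exact nhdsWithin_le_nhds <| (hg 0 a).continuousAt.eventually_ne hk
  | succ k ih =>
    have hderiv : ∀ᶠ t in 𝓝[>] a, g 1 t ≠ 0 :=
      ih (g := fun j => g (j + 1)) (fun j t => hg (j + 1) t) hk fun j hj => hlt (j + 1) (by omega)
    obtain ⟨b, hab, hb⟩ := (nhdsGT_basis a).eventually_iff.mp hderiv
    filter_upwards [Ioo_mem_nhdsGT hab] with t ht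
    -- mean value theorem: `g 0 t = g 0 t - g 0 a = (t - a) * g 1 ξ` with `ξ ∈ (a, t)`
    obtain ⟨ξ, hξ, hslope⟩ := exists_hasDerivAt_eq_slope (g 0) (g 1) ht.1
      (fun s _ => (hg 0 s).continuousAt.continuousWithinAt) fun s _ => hg 0 s
    have hξb : ξ ∈ Ioo a b := ⟨hξ.1, hξ.2.trans ht.2⟩
    rw [hlt 0 k.succ_pos, sub_zero, eq_div_iff (sub_pos.2 ht.1).ne'] at hslope
    rw [← hslope]
    exact mul_ne_zero (hb hξb) (sub_pos.2 ht.1).ne'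

theorem measure_eq_zero_of_pairwise_disjoint_preimage {α : Type*} [MeasurableSpace α]
    {μ : Measure α} [IsFiniteMeasure μ] {f : ℕ → α → α} (hf : ∀ i, MeasurePreserving (f i) μ μ)
    {s : Set α} (hs : MeasurableSet s)
    (hdisj : Pairwise fun i j => Disjoint (f i ⁻¹' s) (f j ⁻¹' s)) :
    μ s = 0 := by
  by_contra hne
  obtain ⟨i, j, hij, hmeet⟩ := exists_nonempty_inter_of_measure_univ_lt_tsum_measure μ
    (fun i => (hs.preimage (hf i).measurable).nullMeasurableSet) <| by
      simp only [fun i => (hf i).measure_preimage hs.nullMeasurableSet,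
        ENNReal.tsum_const_eq_top_of_ne_zero hne]
      exact measure_lt_top μ univ
  exact hmeet.ne_empty (disjoint_iff_inter_eq_empty.mp (hdisj hij))

namespace Flow

variable {X : Type*} [TopologicalSpace X] [MeasurableSpace X] [BorelSpace X]
  (φ : Flow ℝ X) {μ : Measure X}

theorem measure_eq_zero_of_forall_rat_apply_notMem [IsFiniteMeasure μ]
    (hinv : ∀ t, μ.map (φ t) = μ) {S : Set X} (hS : MeasurableSet S) {c : ℚ} (hc : 0 < c)
    (hS_wander : ∀ ρ ∈ S, ∀ q : ℚ, 0 < q → q ≤ c → φ q ρ ∉ S) :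
    μ S = 0 := by
  set s : ℕ → ℚ := fun i => c / (i + 1)
  refine measure_eq_zero_of_pairwise_disjoint_preimage
    (fun i => ⟨(φ.continuous_toFun _).measurable, hinv (s i)⟩) hS ?_
  refine (pairwise_disjoint_on _).mpr fun i j hij => Set.disjoint_left.mpr fun ρ hi hj => ?_
  have hlt : s j < s i := by simp only [s]; gcongr
  have hsj : 0 < s j := by positivity
  have hsi : s i ≤ c := div_le_self hc.le (by simp)
  refine hS_wander _ hj (s i - s j) (sub_pos.2 hlt) (by linarith) ?_
  rwa [Rat.cast_sub, ← φ.map_add, sub_add_cancel]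

theorem measure_setOf_forall_rat_ne_zero [IsFiniteMeasure μ] (hinv : ∀ t, μ.map (φ t) = μ)
    {f : X → ℝ} (hf : Measurable f) {c : ℚ} (hc : 0 < c) :
    μ {ρ | f ρ = 0 ∧ ∀ q : ℚ, 0 < q → q ≤ c → f (φ q ρ) ≠ 0} = 0 := by
  refine φ.measure_eq_zero_of_forall_rat_apply_notMem hinv ?_ hc fun ρ hρ q hq hqc hφρ => ?_
  · have hφ : ∀ t, Measurable (φ t) := fun t => (φ.continuous_toFun t).measurable
    measurability
  · exact hρ.2 q hq hqc hφρ.1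

end Flow

theorem stmt_4_general {X : Type*} [MetricSpace X]
    [MeasurableSpace X] [BorelSpace X]
    (φ : Flow ℝ X) (μ : Measure X) [IsProbabilityMeasure μ]
    (hinv : ∀ t : ℝ, μ.map (φ.toFun t) = μ)
    (xn : X → ℝ) (hxn : Continuous xn)
    (D : ℕ → X → ℝ) (hD0 : D 0 = xn)
    (hDderiv : ∀ (k : ℕ) (ρ : X) (t : ℝ),
      HasDerivAt (fun s : ℝ => D k (φ.toFun s ρ)) (D (k + 1) (φ.toFun t ρ)) t) :
    μ (⋃ k : ℕ, {ρ : X | xn ρ = 0 ∧ D k ρ ≠ 0 ∧ ∀ j < k, D j ρ = 0}) = 0 := by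
  refine measure_mono_null (t := ⋃ c : {c : ℚ // 0 < c},
    {ρ | xn ρ = 0 ∧ ∀ q : ℚ, 0 < q → q ≤ c → xn (φ q ρ) ≠ 0}) ?_
    (measure_iUnion_null fun c => φ.measure_setOf_forall_rat_ne_zero hinv hxn.measurable c.2)
  simp only [iUnion_subset_iff]
  rintro k ρ ⟨hρ, hk, hlt⟩
  have hleave : ∀ᶠ t in 𝓝[>] (0 : ℝ), xn (φ t ρ) ≠ 0 := by
    refine hD0 ▸ eventually_nhdsGT_ne_zero_of_hasDerivAt_succ (k := k) (hDderiv · ρ) ?_ ?_ <;>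
      simpa only [φ.map_zero_apply]
  obtain ⟨b, hb, hIoo⟩ := (nhdsGT_basis 0).eventually_iff.mp hleave
  obtain ⟨c, hc, hcb⟩ := exists_rat_btwn hb
  exact mem_iUnion.mpr ⟨⟨c, by exact_mod_cast hc⟩, hρ, fun q hq hqc =>
    hIoo ⟨by exact_mod_cast hq, (Rat.cast_le.mpr hqc).trans_lt hcb⟩⟩

/-- Abstract model of the geodesic flow on `X = S*M` near a hypersurface `H`,
with Fermi normal coordinate `xn` (so `S*_H M = {xn = 0}`).  `D k` denotes the `k`-th
iterated derivative `H_p^k xn` of `xn` along the flow, encoded by `D 0 = xn` and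
`d/dt (D k)(φ_t ρ) = (D (k+1))(φ_t ρ)`.  With
`G^k = {ρ ∈ S*_H M : (H_p^k xn)(ρ) ≠ 0, (H_p^j xn)(ρ) = 0 for j < k}`,
any flow-invariant Borel probability measure `μ` satisfies `μ(⋃ k, G^k) = 0`;
in particular `μ|_{S*_H M}` is supported on points of infinite-order tangency. -/
theorem stmt_4 {X : Type*} [MetricSpace X] [CompactSpace X]
    [MeasurableSpace X] [BorelSpace X]
    (φ : Flow ℝ X) (μ : Measure X) [IsProbabilityMeasure μ]
    (hinv : ∀ t : ℝ, μ.map (φ.toFun t) = μ)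
    (xn : X → ℝ) (hxn : Continuous xn)
    (D : ℕ → X → ℝ) (hD0 : D 0 = xn) (hDcont : ∀ k, Continuous (D k))
    (hDderiv : ∀ (k : ℕ) (ρ : X) (t : ℝ),
      HasDerivAt (fun s : ℝ => D k (φ.toFun s ρ)) (D (k + 1) (φ.toFun t ρ)) t) :
    μ (⋃ k : ℕ, {ρ : X | xn ρ = 0 ∧ D k ρ ≠ 0 ∧ ∀ j < k, D j ρ = 0}) = 0 :=
  stmt_4_general φ μ hinv xn hxn D hD0 hDderiv
end

section
/- Let (M,g) be a compact Riemannian manifold, H a smooth embedded hypersurface with second fundamental form Q, and μ an invariant probability measure for the geodesic flow. Then the support of μ restricted to S*H is contained in the null set of the second fundamental form: μ({(x',ξ') ∈ S*H : Q(x',ξ') ≠ 0}) = 0. -/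
open MeasureTheory Set Filter Topology

/-- If `f` is analytic (here: `C^ω`, since `⊤ = ω`) and its second derivative at `t` is
nonzero, then `f` is nonzero on a punctured neighborhood of `t`. -/
lemma aux_isolated_zero {f : ℝ → ℝ} {t : ℝ} (hf : ContDiff ℝ (⊤ : ℕ∞) f)
    (h2 : deriv (deriv f) t ≠ 0) : ∀ᶠ s in 𝓝[≠] t, f s ≠ 0 := by
  obtain ⟨hd, hd'⟩ := contDiff_infty_iff_deriv.1 hf
  have hdd : Differentiable ℝ (deriv f) := hd'.differentiable (by simp)
  have hfc : Continuous f := hd.continuous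
  by_cases hft : f t = 0
  · have hne : ∀ᶠ z in 𝓝[≠] t, deriv f z ≠ 0 := by
      by_cases hdt : deriv f t = 0
      · exact (hdd t).hasDerivAt.eventually_ne (c := 0) h2
      · exact nhdsWithin_le_nhds ((hd'.continuous.continuousAt).eventually_ne hdt)
    rw [eventually_nhdsWithin_iff, Metric.eventually_nhds_iff] at hne ⊢
    obtain ⟨ε, hε, hball⟩ := hne
    refine ⟨ε, hε, fun z hz hzt hfz => ?_⟩
    rcases lt_or_gt_of_ne (show z ≠ t from hzt) with hlt | hlt
    · obtain ⟨c, hc, hc0⟩ := exists_deriv_eq_zero hlt hfc.continuousOn (hfz.trans hft.symm)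
      refine hball ?_ (show c ≠ t from (ne_of_lt hc.2)) hc0
      rw [Real.dist_eq] at hz ⊢
      rw [abs_lt] at hz ⊢
      constructor <;> linarith [hc.1, hc.2]
    · obtain ⟨c, hc, hc0⟩ := exists_deriv_eq_zero hlt hfc.continuousOn (hft.trans hfz.symm)
      refine hball ?_ (show c ≠ t from (ne_of_gt hc.1)) hc0
      rw [Real.dist_eq] at hz ⊢
      rw [abs_lt] at hz ⊢
      constructor <;> linarith [hc.1, hc.2]
  · exact nhdsWithin_le_nhds ((hfc.continuousAt).eventually_ne hft)

/-- Abstract model of the geodesic flow on `X = S*M` near a hypersurface `H`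
with Fermi normal coordinate `xn` and dual momentum `ξn`, so `S*H = {xn = 0, ξn = 0}`.
`Q` is the second fundamental form of `H`, regarded as a function on `S*H`, characterized
by the fact that at points of `S*H` the second derivative of `xn` along the geodesic flow
equals `2 Q`.  Then any flow-invariant Borel probability measure `μ` gives no mass to the
set of points of `S*H` where `Q ≠ 0`: the support of `μ|_{S*H}` is contained in the
null set of the second fundamental form. -/
theorem stmt_5 {X : Type*} [MetricSpace X] [CompactSpace X]
    [MeasurableSpace X] [BorelSpace X]
    (φ : Flow ℝ X) (μ : Measure X) [IsProbabilityMeasure μ]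
    (hinv : ∀ t : ℝ, μ.map (φ.toFun t) = μ)
    (xn ξn : X → ℝ) (hxn : Continuous xn) (hξn : Continuous ξn)
    (hderiv : ∀ (ρ : X) (t : ℝ),
      HasDerivAt (fun s : ℝ => xn (φ.toFun s ρ)) (2 * ξn (φ.toFun t ρ)) t)
    (hsmooth : ∀ ρ : X, ContDiff ℝ (⊤ : ℕ∞) (fun t : ℝ => xn (φ.toFun t ρ)))
    (Q : X → ℝ) (hQcont : Continuous Q)
    (hQ : ∀ ρ : X, xn ρ = 0 → ξn ρ = 0 →
      deriv (deriv (fun t : ℝ => xn (φ.toFun t ρ))) 0 = 2 * Q ρ) :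
    μ {ρ : X | xn ρ = 0 ∧ ξn ρ = 0 ∧ Q ρ ≠ 0} = 0 := by
  set E : Set X := {ρ : X | xn ρ = 0 ∧ ξn ρ = 0 ∧ Q ρ ≠ 0} with hE
  -- E is measurable
  have hEmeas : MeasurableSet E := by
    have h1 : MeasurableSet (xn ⁻¹' {0}) := (measurableSet_singleton 0).preimage hxn.measurable
    have h2 : MeasurableSet (ξn ⁻¹' {0}) := (measurableSet_singleton 0).preimage hξn.measurable
    have h3 : MeasurableSet (Q ⁻¹' {0})ᶜ :=
      ((measurableSet_singleton 0).preimage hQcont.measurable).compl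
    have : E = xn ⁻¹' {0} ∩ ξn ⁻¹' {0} ∩ (Q ⁻¹' {0})ᶜ := by
      ext ρ; simp [hE, and_assoc]
    rw [this]
    exact (h1.inter h2).inter h3
  -- continuity/measurability of the flow
  have hφcont : Continuous fun p : ℝ × X => φ.toFun p.1 p.2 := φ.cont'
  have hφt_meas : ∀ t : ℝ, Measurable (φ.toFun t) := fun t =>
    (hφcont.comp (continuous_const.prodMk continuous_id)).measurable
  have hφρ_cont : ∀ ρ : X, Continuous fun t : ℝ => φ.toFun t ρ := fun ρ =>
    hφcont.comp (continuous_id.prodMk continuous_const)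
  -- The time set in E is countable for every orbit
  have hT : ∀ ρ : X, Set.Countable {t : ℝ | φ.toFun t ρ ∈ E} := by
    intro ρ
    set f : ℝ → ℝ := fun s => xn (φ.toFun s ρ) with hf
    set T : Set ℝ := {t : ℝ | φ.toFun t ρ ∈ E} with hTdef
    have hdisc : DiscreteTopology T := by
      rw [discreteTopology_subtype_iff]
      intro t ht
      rw [inf_principal_eq_bot]
      -- second derivative of f at t is 2 * Q (φ t ρ) ≠ 0
      set σ : X := φ.toFun t ρ with hσ
      obtain ⟨hσ1, hσ2, hσ3⟩ : xn σ = 0 ∧ ξn σ = 0 ∧ Q σ ≠ 0 := ht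
      have hshift : (fun s : ℝ => xn (φ.toFun s σ)) = fun s : ℝ => f (s + t) := by
        funext s
        simp only [hσ, hf, ← φ.map_add]
      have hfd : deriv (deriv (fun s : ℝ => xn (φ.toFun s σ))) 0 = deriv (deriv f) t := by
        rw [hshift]
        have hd1 : deriv (fun s : ℝ => f (s + t)) = fun s : ℝ => deriv f (s + t) := by
          funext s; exact deriv_comp_add_const ..
        rw [hd1]
        have := deriv_comp_add_const (f := deriv f) (a := t) (x := (0 : ℝ))
        simpa using this
      have h2 : deriv (deriv f) t ≠ 0 := by
        rw [← hfd, hQ σ hσ1 hσ2]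
        exact mul_ne_zero two_ne_zero hσ3
      have hev : ∀ᶠ s in 𝓝[≠] t, f s ≠ 0 := aux_isolated_zero (hsmooth ρ) h2
      filter_upwards [hev] with s hs
      intro hsT
      exact hs hsT.1
    exact (HereditarilyLindelof_LindelofSets T).countable hdisc
  -- invariance
  have h1 : ∀ t : ℝ, μ (φ.toFun t ⁻¹' E) = μ E := by
    intro t
    conv_rhs => rw [← hinv t]
    rw [Measure.map_apply (hφt_meas t) hEmeas]
  -- the indicator function
  set G : X → ENNReal := E.indicator 1 with hG
  have hGmeas : Measurable G := measurable_one.indicator hEmeas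
  have hGpre : ∀ (t : ℝ) (ρ : X), G (φ.toFun t ρ) = (φ.toFun t ⁻¹' E).indicator 1 ρ := by
    intro t ρ
    simp only [hG]
    by_cases h : φ.toFun t ρ ∈ E
    · simp [Set.indicator_of_mem, h]
    · simp [Set.indicator_of_notMem, h]
  -- Fubini computation
  have key : μ E = ∫⁻ t in Set.Icc (0 : ℝ) 1, μ (φ.toFun t ⁻¹' E) ∂volume := by
    simp only [h1]
    rw [setLIntegral_const]
    rw [Real.volume_Icc]
    simp
  have step2 : ∀ t : ℝ, μ (φ.toFun t ⁻¹' E) = ∫⁻ ρ, G (φ.toFun t ρ) ∂μ := by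
    intro t
    simp only [hGpre]
    rw [lintegral_indicator_one (hEmeas.preimage (hφt_meas t))]
  have hFmeas : Measurable fun p : ℝ × X => G (φ.toFun p.1 p.2) := hGmeas.comp hφcont.measurable
  have swap : ∫⁻ t in Set.Icc (0 : ℝ) 1, ∫⁻ ρ, G (φ.toFun t ρ) ∂μ ∂volume
      = ∫⁻ ρ, ∫⁻ t in Set.Icc (0 : ℝ) 1, G (φ.toFun t ρ) ∂volume ∂μ := by
    exact lintegral_lintegral_swap (hFmeas.aemeasurable)
  have inner_zero : ∀ ρ : X, ∫⁻ t in Set.Icc (0 : ℝ) 1, G (φ.toFun t ρ) ∂volume = 0 := by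
    intro ρ
    have hTmeas : MeasurableSet {t : ℝ | φ.toFun t ρ ∈ E} := hEmeas.preimage (hφρ_cont ρ).measurable
    have hGind : ∀ t : ℝ, G (φ.toFun t ρ) = ({t : ℝ | φ.toFun t ρ ∈ E}).indicator 1 t := by
      intro t
      simp only [hG]
      by_cases h : φ.toFun t ρ ∈ E
      · simp [Set.indicator_of_mem, h]
      · simp [Set.indicator_of_notMem, h]
    simp only [hGind]
    rw [lintegral_indicator_one hTmeas]
    refine le_antisymm ?_ zero_le
    calc (volume.restrict (Set.Icc (0:ℝ) 1)) {t : ℝ | φ.toFun t ρ ∈ E}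
        ≤ volume {t : ℝ | φ.toFun t ρ ∈ E} := Measure.restrict_le_self _
      _ = 0 := (hT ρ).measure_zero _
  rw [key]
  calc ∫⁻ t in Set.Icc (0 : ℝ) 1, μ (φ.toFun t ⁻¹' E) ∂volume
      = ∫⁻ t in Set.Icc (0 : ℝ) 1, ∫⁻ ρ, G (φ.toFun t ρ) ∂μ ∂volume := by
        simp only [step2]
    _ = ∫⁻ ρ, ∫⁻ t in Set.Icc (0 : ℝ) 1, G (φ.toFun t ρ) ∂volume ∂μ := swap
    _ = 0 := by simp only [inner_zero]; simp
end

section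
/- Let (M,g) be a compact Riemannian manifold and H ⊂ M a smooth embedded hypersurface whose second fundamental form is nondegenerate (Q(x',ξ') ≠ 0 for all unit ξ' ∈ T*_{x'}H and x' ∈ H). Then every geodesic-flow-invariant probability measure μ on S*M satisfies μ(S*_H M) = 0. -/
open MeasureTheory Set Filter Topology
open scoped ContDiff


lemma lemA {f : ℝ → ℝ} {t c : ℝ} (hf : HasDerivAt f c t) (hc : c ≠ 0) :
    ∀ᶠ s in 𝓝[≠] t, f s ≠ f t := by
  have h := hasDerivAt_iff_tendsto_slope.mp hf
  filter_upwards [h.eventually_ne hc, self_mem_nhdsWithin] with s hs hst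
  intro h'
  apply hs
  simp [slope_def_field, h']

lemma lemB {f : ℝ → ℝ} (hd : Differentiable ℝ f) {t : ℝ} (h0 : f t = 0)
    (hg : ∀ᶠ s in 𝓝[≠] t, deriv f s ≠ 0) : ∀ᶠ s in 𝓝[≠] t, f s ≠ 0 := by
  rw [eventually_iff, Metric.mem_nhdsWithin_iff] at hg ⊢
  obtain ⟨ε, εpos, hε⟩ := hg
  rw [Set.subset_def] at hε
  refine ⟨ε, εpos, fun s hsm => ?_⟩
  obtain ⟨hs, hst⟩ := hsm
  simp only [Set.mem_setOf_eq]
  rw [Metric.mem_ball, Real.dist_eq, abs_lt] at hs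
  rcases lt_or_gt_of_ne (Set.mem_compl_singleton_iff.mp hst) with h | h
  · obtain ⟨c, hc, hc'⟩ := exists_hasDerivAt_eq_slope f (deriv f) h
      (hd.continuous.continuousOn) (fun x _ => (hd x).hasDerivAt)
    have hcb : c ∈ Metric.ball t ε := by
      rw [Metric.mem_ball, Real.dist_eq, abs_lt]
      constructor <;> nlinarith [hc.1, hc.2]
    have hne := hε c ⟨hcb, Set.mem_compl_singleton_iff.mpr (ne_of_lt hc.2)⟩
    simp only [Set.mem_setOf_eq] at hne
    intro hfs
    rw [hfs, h0] at hc'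
    simp at hc'
    exact hne hc'
  · obtain ⟨c, hc, hc'⟩ := exists_hasDerivAt_eq_slope f (deriv f) h
      (hd.continuous.continuousOn) (fun x _ => (hd x).hasDerivAt)
    have hcb : c ∈ Metric.ball t ε := by
      rw [Metric.mem_ball, Real.dist_eq, abs_lt]
      constructor <;> nlinarith [hc.1, hc.2]
    have hne := hε c ⟨hcb, Set.mem_compl_singleton_iff.mpr (ne_of_gt hc.1)⟩
    simp only [Set.mem_setOf_eq] at hne
    intro hfs
    rw [hfs, h0] at hc'
    simp at hc'
    exact hne hc'

lemma lemC {f : ℝ → ℝ} (hf : ContDiff ℝ (⊤ : ℕ∞) f) {t : ℝ} (h0 : f t = 0)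
    (h : deriv f t ≠ 0 ∨ deriv (deriv f) t ≠ 0) : ∀ᶠ s in 𝓝[≠] t, f s ≠ 0 := by
  have hf' : ContDiff ℝ ∞ f := hf.of_le (by simp)
  have hd : Differentiable ℝ f := hf'.differentiable (by norm_num)
  have hg : ContDiff ℝ ∞ (deriv f) := (contDiff_infty_iff_deriv.mp hf').2
  rcases eq_or_ne (deriv f t) 0 with hz | hz
  · have hsecond : deriv (deriv f) t ≠ 0 := h.resolve_left (by simp [hz])
    have h2 : ∀ᶠ s in 𝓝[≠] t, deriv f s ≠ deriv f t :=
      lemA ((hg.differentiable (by norm_num) t).hasDerivAt) hsecond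
    exact lemB hd h0 (h2.mono fun s hs => by rw [hz] at hs; exact hs)
  · have h2 : ∀ᶠ s in 𝓝 t, deriv f s ≠ 0 :=
      ((hg.continuous.tendsto t)).eventually_ne hz
    exact lemB hd h0 (nhdsWithin_le_nhds h2)

lemma lemD {Z : Set ℝ} (h : ∀ t ∈ Z, ∀ᶠ s in 𝓝[≠] t, s ∉ Z) : Z.Countable := by
  have : DiscreteTopology Z := by
    rw [discreteTopology_subtype_iff]
    intro t ht
    rw [← Filter.empty_mem_iff_bot]
    have h1 : {s | s ∉ Z} ∈ 𝓝[≠] t := h t ht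
    have h2 : {s | s ∉ Z} ∩ Z ∈ 𝓝[≠] t ⊓ 𝓟 Z :=
      Filter.inter_mem_inf h1 (Filter.mem_principal_self Z)
    have h3 : {s | s ∉ Z} ∩ Z = ∅ := by
      ext s; simp only [Set.mem_inter_iff, Set.mem_setOf_eq, Set.mem_empty_iff_false, iff_false]
      tauto
    rwa [h3] at h2
  exact Set.countable_coe_iff.mp (TopologicalSpace.separableSpace_iff_countable.mp
    inferInstance)

/-- Abstract model of the geodesic flow on `X = S*M` near a hypersurface `H`
with Fermi normal coordinate `xn` and dual momentum `ξn` (`S*_H M = {xn = 0}`,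
`S*H = {xn = 0, ξn = 0}`), and second fundamental form `Q` characterized at points of
`S*H` by `(d/dt)² xn(φ_t ρ)|_{t=0} = 2 Q(ρ)`.  If the second fundamental form is
nondegenerate (`Q ≠ 0` everywhere on `S*H`), then every flow-invariant Borel probability
measure `μ` satisfies `μ(S*_H M) = 0`. -/
theorem stmt_6 {X : Type*} [MetricSpace X] [CompactSpace X]
    [MeasurableSpace X] [BorelSpace X]
    (φ : Flow ℝ X) (μ : Measure X) [IsProbabilityMeasure μ]
    (hinv : ∀ t : ℝ, μ.map (φ.toFun t) = μ)
    (xn ξn : X → ℝ) (hxn : Continuous xn) (hξn : Continuous ξn)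
    (hderiv : ∀ (ρ : X) (t : ℝ),
      HasDerivAt (fun s : ℝ => xn (φ.toFun s ρ)) (2 * ξn (φ.toFun t ρ)) t)
    (hsmooth : ∀ ρ : X, ContDiff ℝ (⊤ : ℕ∞) (fun t : ℝ => xn (φ.toFun t ρ)))
    (Q : X → ℝ) (hQcont : Continuous Q)
    (hQ : ∀ ρ : X, xn ρ = 0 → ξn ρ = 0 →
      deriv (deriv (fun t : ℝ => xn (φ.toFun t ρ))) 0 = 2 * Q ρ)
    (hQnd : ∀ ρ : X, xn ρ = 0 → ξn ρ = 0 → Q ρ ≠ 0) :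
    μ {ρ : X | xn ρ = 0} = 0 := by
  set A : Set X := {ρ : X | xn ρ = 0} with hA_def
  have hA : MeasurableSet A := (isClosed_eq hxn continuous_const).measurableSet
  -- For each ρ, the set of hitting times is countable.
  have hZ : ∀ ρ : X, ({t : ℝ | xn (φ.toFun t ρ) = 0}).Countable := by
    intro ρ
    set f : ℝ → ℝ := fun t => xn (φ.toFun t ρ) with hf_def
    apply lemD
    intro t ht
    simp only [Set.mem_setOf_eq] at ht
    have hiso : ∀ᶠ s in 𝓝[≠] t, f s ≠ 0 := by
      apply lemC (hsmooth ρ) ht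
      have hdt : deriv f t = 2 * ξn (φ.toFun t ρ) := (hderiv ρ t).deriv
      rcases eq_or_ne (ξn (φ.toFun t ρ)) 0 with hξ0 | hξ0
      · right
        set ρ' := φ.toFun t ρ with hρ'
        have hshift : (fun s : ℝ => xn (φ.toFun s ρ')) = fun s => f (s + t) := by
          funext s
          simp only [hf_def]
          rw [← φ.map_add']
        have e1 : deriv (fun s : ℝ => xn (φ.toFun s ρ')) = fun s => deriv f (s + t) := by
          rw [hshift]
          funext s
          exact deriv_comp_add_const (f := f) (a := t) s
        have e2 : deriv (deriv (fun s : ℝ => xn (φ.toFun s ρ'))) 0 = deriv (deriv f) t := by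
          rw [e1]
          rw [show (fun s : ℝ => deriv f (s + t)) = fun s => (deriv f) (s + t) from rfl]
          rw [deriv_comp_add_const (f := deriv f) (a := t), zero_add]
        have := hQ ρ' ht hξ0
        rw [e2] at this
        rw [this]
        have := hQnd ρ' ht hξ0
        intro h
        apply this
        linarith
      · left
        rw [hdt]
        exact mul_ne_zero two_ne_zero hξ0
    exact hiso.mono fun s hs hmem => hs hmem
  -- Fubini argument
  set ν : Measure ℝ := volume.restrict (Set.Icc (0:ℝ) 1) with hν_def
  set E : Set (ℝ × X) := {p : ℝ × X | xn (φ.toFun p.1 p.2) = 0} with hE_def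
  have hcontE : Continuous fun p : ℝ × X => xn (φ.toFun p.1 p.2) :=
    hxn.comp φ.cont'
  have hE : MeasurableSet E := (isClosed_eq hcontE continuous_const).measurableSet
  have h1 : (ν.prod μ) E = μ A := by
    rw [MeasureTheory.Measure.prod_apply hE]
    have : ∀ t : ℝ, μ (Prod.mk t ⁻¹' E) = μ A := by
      intro t
      have hpre : Prod.mk t ⁻¹' E = φ.toFun t ⁻¹' A := rfl
      have hm : Measurable (φ.toFun t) :=
        (φ.continuous continuous_const continuous_id).measurable
      rw [hpre, ← MeasureTheory.Measure.map_apply hm hA, hinv t]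
    simp only [this]
    rw [MeasureTheory.lintegral_const, hν_def, MeasureTheory.Measure.restrict_apply_univ,
      Real.volume_Icc]
    norm_num
  have h2 : (ν.prod μ) E = 0 := by
    rw [MeasureTheory.Measure.prod_apply_symm hE]
    have : ∀ ρ : X, ν ((fun t => (t, ρ)) ⁻¹' E) = 0 := by
      intro ρ
      have hpre : ((fun t => (t, ρ)) ⁻¹' E) = {t : ℝ | xn (φ.toFun t ρ) = 0} := rfl
      rw [hpre]
      exact (hZ ρ).measure_zero ν
    simp only [this]
    simp
  rw [← h1, h2]
end

section
/- Let φ_t be a continuous flow on a metric space, μ a flow-invariant finite Borel measure, S a Borel subset, and δ > 0. Suppose ρ₀ ∈ S has a neighborhood U in S such that for every ρ ∈ U, the orbit segment {φ_t(ρ) : |t| ≤ δ} meets S only at ρ, and (t,ρ) ↦ φ_t(ρ) gives a homeomorphism of [−δ,δ] × U onto its image. Then on the flow box ⋃_{|t|≤δ} φ_t(U), μ decomposes as μ = dt ⊗ ν^⊥ with a transverse measure ν^⊥ on U; in particular for every Borel A ⊂ U and every 0 < T ≤ δ, ν^⊥(A) = (1/(2T))·μ(⋃_{|t|≤T} φ_t(A)).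 -/
/-!
Pull `μ` back along `(t, ρ) ↦ φ_t ρ` to a measure `m` on `ℝ × X` carried by the box
`[-δ, δ] × U`: the map is injective on the box and open onto its image, so it sends Borel subsets
of the box to traces of Borel sets on the image, which makes `G ↦ μ (φ (G ∩ box))` countably
additive. For a Borel `A ⊆ U`, the time marginal of `m` over `A` is invariant under translations
inside `[-δ, δ]` (invariance of `μ`) and has no atoms (the disjoint sets `φ_t A`, `|t| ≤ δ`, all
have measure `μ A`, which must vanish as `μ` is finite). Its distribution function is therefore
additive and monotone in the interval length, hence linear, so `μ (⋃_{|t|≤T} φ_t A) / (2T)` does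
not depend on `T`, and `ν^⊥ = (2δ)⁻¹ • snd_* m` works.
-/

open MeasureTheory Set Filter Topology
open Function (uncurry)
open scoped Function

theorem eq_div_mul_of_map_add_of_nonneg {g : ℝ → ℝ} {c : ℝ} (hc : 0 < c)
    (hg : ∀ x, 0 ≤ x → x ≤ c → 0 ≤ g x)
    (hadd : ∀ a b, 0 ≤ a → 0 ≤ b → a + b ≤ c → g (a + b) = g a + g b)
    {x : ℝ} (hx : 0 ≤ x) (hxc : x ≤ c) : g x = x / c * g c := by
  have hnsmul : ∀ (k : ℕ) y, 0 ≤ y → k * y ≤ c → g (k * y) = k * g y := by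
    intro k y hy hky
    induction k with
    | zero => simpa using hadd 0 0 le_rfl le_rfl (by simpa using hc.le)
    | succ k ih =>
      push_cast at hky ⊢
      rw [add_one_mul, hadd _ _ (by positivity) hy (by linarith), ih (by linarith), add_one_mul]
  have hlower : ∀ (n : ℕ) z, 0 ≤ z → z ≤ c → (z / c - 1 / (n + 1)) * g c ≤ g z := by
    intro n z hz hzc
    set y := c / (n + 1)
    have hy : 0 < y := by positivity
    set k := ⌊z / y⌋₊
    have hky : k * y ≤ z := (le_div_iff₀ hy).1 (Nat.floor_le (by positivity))
    have hk : z / y < k + 1 := Nat.lt_floor_add_one _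
    have hny : ((n + 1 : ℕ) : ℝ) * y = c := by
      push_cast
      exact mul_div_cancel₀ c (by positivity)
    have hgc : g c = (n + 1) * g y := by
      have h := hnsmul (n + 1) y hy.le hny.le
      rw [hny] at h
      exact_mod_cast h
    calc (z / c - 1 / (n + 1)) * g c = (z / y - 1) * g y := by
          rw [hgc]; simp only [y]; field_simp
      _ ≤ k * g y := by
          have hyc : y ≤ c := div_le_self hc.le (by linarith [n.cast_nonneg' (α := ℝ)])
          exact mul_le_mul_of_nonneg_right (by linarith) (hg y hy.le hyc)
      _ = g (k * y) := (hnsmul k y hy.le (hky.trans hzc)).symm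
      _ ≤ g z := by
          have hky0 : 0 ≤ (k : ℝ) * y := by positivity
          have h := hadd (k * y) (z - k * y) hky0 (by linarith) (by linarith)
          rw [add_sub_cancel] at h
          linarith [hg (z - k * y) (by linarith) (by linarith)]
  have hupper : ∀ n : ℕ, g x ≤ (x / c + 1 / (n + 1)) * g c := by
    intro n
    have h1 := hlower n (c - x) (by linarith) (by linarith)
    have h2 := hadd x (c - x) hx (by linarith) (by linarith)
    rw [add_sub_cancel] at h2
    rw [sub_div, div_self hc.ne'] at h1
    linarith
  have hlim : Tendsto (fun n : ℕ => 1 / ((n : ℝ) + 1)) atTop (𝓝 0) :=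
    tendsto_one_div_add_atTop_nhds_zero_nat
  apply le_antisymm
  · refine ge_of_tendsto' (x := atTop)
      (f := fun n : ℕ => (x / c + 1 / ((n : ℝ) + 1)) * g c) ?_ hupper
    simpa using (hlim.const_add (x / c)).mul_const (g c)
  · refine le_of_tendsto' (x := atTop)
      (f := fun n : ℕ => (x / c - 1 / ((n : ℝ) + 1)) * g c) ?_ fun n => hlower n x hx hxc
    simpa using (hlim.const_sub (x / c)).mul_const (g c)

theorem measureReal_Ico_eq_of_measure_Ico_add {ν : Measure ℝ} [IsFiniteMeasure ν] {p q : ℝ}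
    (hpq : p < q)
    (htrans : ∀ a b s, p ≤ a → 0 ≤ s → b + s ≤ q → ν (Ico (a + s) (b + s)) = ν (Ico a b))
    {a b : ℝ} (ha : p ≤ a) (hab : a ≤ b) (hb : b ≤ q) :
    ν.real (Ico a b) = (b - a) / (q - p) * ν.real (Ico p q) := by
  have htrans' : ∀ a b s, p ≤ a → 0 ≤ s → b + s ≤ q →
      ν.real (Ico (a + s) (b + s)) = ν.real (Ico a b) :=
    fun a b s ha hs hb => congrArg ENNReal.toReal (htrans a b s ha hs hb)
  have hadd : ∀ x y, 0 ≤ x → 0 ≤ y → x + y ≤ q - p →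
      ν.real (Ico p (p + (x + y))) = ν.real (Ico p (p + x)) + ν.real (Ico p (p + y)) := by
    intro x y hx hy hxy
    rw [show p + (x + y) = p + y + x by ring,
      ← Ico_union_Ico_eq_Ico (by linarith : p ≤ p + x) (by linarith : p + x ≤ p + y + x),
      measureReal_union Ico_disjoint_Ico_same measurableSet_Ico,
      htrans' p (p + y) x le_rfl hx (by linarith)]
  have h := eq_div_mul_of_map_add_of_nonneg (g := fun L => ν.real (Ico p (p + L)))
    (sub_pos.2 hpq) (fun _ _ _ => measureReal_nonneg) hadd (sub_nonneg.2 hab) (by linarith)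
  have hshift := htrans' p (p + (b - a)) (a - p) le_rfl (by linarith) (by linarith)
  rw [show p + (a - p) = a by ring, show p + (b - a) + (a - p) = b by ring] at hshift
  simpa only [add_sub_cancel, ← hshift] using h

section PullbackAlongInjOn

variable {α β : Type*} [MeasurableSpace α] [MeasurableSpace β]

theorem exists_measure_apply_eq_measure_image_inter (μ : Measure β) {f : α → β} {s : Set α}
    (hf : InjOn f s)
    (hrel : ∀ G, MeasurableSet G → ∃ C, MeasurableSet C ∧ f '' (G ∩ s) = C ∩ f '' s) :
    ∃ m : Measure α, ∀ G, MeasurableSet G → m G = μ (f '' (G ∩ s)) := by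
  refine ⟨((OuterMeasure.comap f μ.toOuterMeasure).restrict s).toMeasure fun G hG => ?_,
    fun G hG => by
      rw [toMeasure_apply _ _ hG, OuterMeasure.restrict_apply, OuterMeasure.comap_apply]; rfl⟩
  obtain ⟨C, hC, hGC⟩ := hrel G hG
  -- `C` cuts each `f '' (t ∩ s)` exactly into `f '' (t ∩ G ∩ s)` and `f '' (t \ G ∩ s)`.
  refine (OuterMeasure.isCaratheodory_iff_le' _).2 fun t => le_of_eq ?_
  simp only [OuterMeasure.restrict_apply, OuterMeasure.comap_apply]
  have hts : f '' (t ∩ s) ⊆ f '' s := image_mono inter_subset_right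
  have hinter : f '' (t ∩ G ∩ s) = f '' (t ∩ s) ∩ C := by
    rw [inter_inter_distrib_right, hf.image_inter inter_subset_right inter_subset_right, hGC,
      ← inter_assoc, inter_eq_left.2 (inter_subset_left.trans hts)]
  have hdiff : f '' (t \ G ∩ s) = f '' (t ∩ s) \ C := by
    rw [inter_sdiff_distrib_right, (hf.mono inter_subset_right).image_sdiff,
      ← inter_inter_distrib_right, hinter, sdiff_self_inter]
  rw [hinter, hdiff]
  exact measure_inter_add_sdiff _ hC

theorem exists_measurableSet_image_inter_eq [TopologicalSpace α] [BorelSpace α]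
    [TopologicalSpace β] [OpensMeasurableSpace β] {f : α → β} {s : Set α} (hf : InjOn f s)
    (hopen : ∀ V, IsOpen V → ∃ W, IsOpen W ∧ f '' (V ∩ s) = W ∩ f '' s)
    {G : Set α} (hG : MeasurableSet G) :
    ∃ C, MeasurableSet C ∧ f '' (G ∩ s) = C ∩ f '' s := by
  induction G, hG using MeasurableSet.induction_on_open with
  | isOpen V hV =>
    obtain ⟨W, hW, h⟩ := hopen V hV
    exact ⟨W, hW.measurableSet, h⟩
  | compl G _ ih =>
    obtain ⟨C, hC, h⟩ := ih
    refine ⟨Cᶜ, hC.compl, ?_⟩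
    rw [inter_comm, ← sdiff_eq, hf.image_sdiff, inter_comm s, h, sdiff_inter_self_eq_sdiff,
      sdiff_eq_compl_inter]
  | iUnion G _ _ ih =>
    choose C hC h using ih
    exact ⟨⋃ i, C i, .iUnion hC, by simp_rw [iUnion_inter, image_iUnion, h]⟩

end PullbackAlongInjOn

namespace Flow

variable {X : Type*} [TopologicalSpace X] (φ : Flow ℝ X)

theorem image_uncurry_image_add_const_prod (s : ℝ) (I : Set ℝ) (A : Set X) :
    uncurry φ '' (((· + s) '' I) ×ˢ A) = φ s '' (uncurry φ '' (I ×ˢ A)) := by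
  rw [← image_id A, prod_image_image_eq, image_id, image_image, image_image]
  refine image_congr fun p _ => ?_
  simp only [uncurry, id, add_comm p.1 s, map_add]

variable [MeasurableSpace X] [BorelSpace X] {μ : Measure X}

theorem measure_image_eq_of_map_eq (hinv : ∀ t, μ.map (φ t) = μ) (t : ℝ) (E : Set X) :
    μ (φ t '' E) = μ E := by
  rw [image_eq_preimage_symm]
  exact ((φ.toHomeomorph (-t)).toMeasurableEquiv.map_apply E).symm.trans
    (congrArg (· E) (hinv (-t)))

theorem measure_eq_zero_of_injOn [IsFiniteMeasure μ] (hinv : ∀ t, μ.map (φ t) = μ)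
    {A : Set X} (hA : MeasurableSet A) {δ : ℝ} (hδ : 0 < δ)
    (hinj : InjOn (uncurry φ) (Icc (-δ) δ ×ˢ A)) : μ A = 0 := by
  by_contra hA0
  have hmeas : ∀ t : Icc (-δ) δ, MeasurableSet (φ t '' A) := fun t => by
    rw [image_eq_preimage_symm]
    exact (φ.continuous_toFun _).measurable hA
  have hdisj : Pairwise (Disjoint on fun t : Icc (-δ) δ => φ t '' A) := by
    refine fun t t' htt' => disjoint_left.2 ?_
    rintro _ ⟨a, ha, rfl⟩ ⟨a', ha', h⟩
    have hpair := @hinj (t', a') ⟨t'.2, ha'⟩ (t, a) ⟨t.2, ha⟩ h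
    exact htt' (Subtype.ext (Prod.ext_iff.1 hpair).1).symm
  have hcount := Measure.countable_meas_pos_of_disjoint_iUnion (μ := μ) hmeas hdisj
  simp only [φ.measure_image_eq_of_map_eq hinv, pos_iff_ne_zero.2 hA0, ofPred_true,
    countable_univ_iff, countable_coe_iff, Cardinal.Real.Icc_countable_iff] at hcount
  linarith

theorem measureReal_image_uncurry_Icc_prod (hinv : ∀ t, μ.map (φ t) = μ) {A : Set X}
    (hA0 : μ A = 0) {δ : ℝ} {ν : Measure ℝ} [IsFiniteMeasure ν]
    (hν : ∀ I, MeasurableSet I → I ⊆ Icc (-δ) δ → ν I = μ (uncurry φ '' (I ×ˢ A)))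
    {T : ℝ} (hT : 0 < T) (hTδ : T ≤ δ) :
    μ.real (uncurry φ '' (Icc (-T) T ×ˢ A)) =
      T / δ * μ.real (uncurry φ '' (Icc (-δ) δ ×ˢ A)) := by
  have hatom : ∀ t ∈ Icc (-δ) δ, ν {t} = 0 := fun t ht => by
    rw [hν _ (measurableSet_singleton t) (singleton_subset_iff.2 ht), singleton_prod,
      image_image]
    exact (φ.measure_image_eq_of_map_eq hinv t A).trans hA0
  have htrans : ∀ a b s, -δ ≤ a → 0 ≤ s → b + s ≤ δ →
      ν (Ico (a + s) (b + s)) = ν (Ico a b) := by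
    intro a b s ha hs hb
    have hsub : Ico a b ⊆ Icc (-δ) δ := fun t ht => ⟨ha.trans ht.1, by linarith [ht.2]⟩
    have hsub' : Ico (a + s) (b + s) ⊆ Icc (-δ) δ :=
      fun t ht => ⟨by linarith [ht.1], by linarith [ht.2]⟩
    rw [hν _ measurableSet_Ico hsub, hν _ measurableSet_Ico hsub', ← image_add_const_Ico,
      image_uncurry_image_add_const_prod, measure_image_eq_of_map_eq φ hinv]
  have hδ : 0 < δ := hT.trans_le hTδ
  have hIco : ∀ T, 0 < T → T ≤ δ →
      ν.real (Ico (-T) T) = μ.real (uncurry φ '' (Icc (-T) T ×ˢ A)) := fun T hT hTδ => by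
    rw [measureReal_congr (Ico_ae_eq_Icc' (hatom T ⟨by linarith, hTδ⟩))]
    exact congrArg ENNReal.toReal (hν _ measurableSet_Icc (Icc_subset_Icc (by linarith) hTδ))
  rw [← hIco T hT hTδ, ← hIco δ hδ le_rfl, measureReal_Ico_eq_of_measure_Ico_add (by linarith)
    htrans (by linarith) (by linarith) hTδ]
  field_simp

end Flow

theorem stmt_8_general {X : Type*} [MetricSpace X]
    [MeasurableSpace X] [BorelSpace X]
    (φ : Flow ℝ X) (μ : Measure X) [IsFiniteMeasure μ]
    (hinv : ∀ t : ℝ, μ.map (φ.toFun t) = μ)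
    (δ : ℝ) (U : Set X)
    (hinj : ∀ t₁ t₂ : ℝ, |t₁| ≤ δ → |t₂| ≤ δ → ∀ ρ₁ ∈ U, ∀ ρ₂ ∈ U,
      φ.toFun t₁ ρ₁ = φ.toFun t₂ ρ₂ → t₁ = t₂ ∧ ρ₁ = ρ₂)
    (hopen : ∀ V : Set (ℝ × X), IsOpen V →
      ∃ W : Set X, IsOpen W ∧
        (fun p : ℝ × X => φ.toFun p.1 p.2) '' (V ∩ Icc (-δ) δ ×ˢ U) =
          W ∩ (fun p : ℝ × X => φ.toFun p.1 p.2) '' (Icc (-δ) δ ×ˢ U)) :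
    ∃ νperp : Measure X,
      ∀ A : Set X, MeasurableSet A → A ⊆ U → ∀ T : ℝ, 0 < T → T ≤ δ →
        νperp A = ENNReal.ofReal (1 / (2 * T)) *
          μ (⋃ t ∈ Icc (-T) T, φ.toFun t '' A) := by
  have hinjOn : InjOn (uncurry φ) (Icc (-δ) δ ×ˢ U) := fun p hp q hq h =>
    Prod.ext_iff.2 (hinj _ _ (abs_le.2 hp.1) (abs_le.2 hq.1) _ hp.2 _ hq.2 h)
  obtain ⟨m, hm⟩ := exists_measure_apply_eq_measure_image_inter μ hinjOn
    fun G hG => exists_measurableSet_image_inter_eq hinjOn hopen hG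
  have : IsFiniteMeasure m := ⟨by rw [hm univ .univ]; exact measure_lt_top _ _⟩
  refine ⟨ENNReal.ofReal (1 / (2 * δ)) • m.map Prod.snd, fun A hA hAU T hT hTδ => ?_⟩
  have hmA : ∀ I, MeasurableSet I →
      m (I ×ˢ A) = μ (uncurry φ '' ((I ∩ Icc (-δ) δ) ×ˢ A)) := fun I hI => by
    rw [hm _ (hI.prod hA), prod_inter_prod, inter_eq_left.2 hAU]
  have hδ : 0 < δ := hT.trans_le hTδ
  have hA0 := φ.measure_eq_zero_of_injOn hinv hA hδ (hinjOn.mono (prod_mono_right hAU))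
  have key := φ.measureReal_image_uncurry_Icc_prod hinv hA0
    (ν := (m.restrict (univ ×ˢ A)).map Prod.fst) (fun I hI hIδ => by
      rw [Measure.map_apply measurable_fst hI, Measure.restrict_apply (measurable_fst hI),
        univ_prod, ← Set.prod_eq, hmA I hI, inter_eq_left.2 hIδ]) hT hTδ
  rw [Measure.smul_apply, Measure.map_apply measurable_snd hA, ← univ_prod, hmA univ .univ,
    univ_inter, iUnion_image_left, ← image_uncurry_prod, smul_eq_mul, ← ofReal_measureReal,
    ← ofReal_measureReal, ← ENNReal.ofReal_mul (by positivity),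
    ← ENNReal.ofReal_mul (by positivity), key]
  congr 1
  field_simp

/-- flow-box disintegration: Let `φ` be a continuous flow on a metric space,
`μ` a flow-invariant finite Borel measure, `S` a Borel set and `δ > 0`.  Suppose `ρ₀ ∈ S`
has a neighborhood `U` of `ρ₀` in `S` such that for every `ρ ∈ U` the orbit segment
`{φ_t(ρ) : |t| ≤ δ}` meets `S` only at `ρ`, and `(t,ρ) ↦ φ_t(ρ)` is a homeomorphism of
`[−δ,δ] × U` onto its image (encoded by injectivity and openness onto the image, the map
being automatically continuous).  Then `μ` decomposes on the flow box as `dt ⊗ ν^⊥` for a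
transverse measure `ν^⊥` on `U`: in particular, for every Borel `A ⊆ U` and every
`0 < T ≤ δ`, `ν^⊥(A) = (1/(2T)) · μ(⋃_{|t|≤T} φ_t(A))`. -/
theorem stmt_8 {X : Type*} [MetricSpace X]
    [MeasurableSpace X] [BorelSpace X]
    (φ : Flow ℝ X) (μ : Measure X) [IsFiniteMeasure μ]
    (hinv : ∀ t : ℝ, μ.map (φ.toFun t) = μ)
    (S : Set X) (hS : MeasurableSet S) (δ : ℝ) (hδ : 0 < δ)
    (ρ₀ : X) (hρ₀ : ρ₀ ∈ S) (U : Set X) (hUS : U ⊆ S)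
    (hUnbhd : U ∈ nhdsWithin ρ₀ S)
    (honce : ∀ ρ ∈ U, ∀ t : ℝ, |t| ≤ δ → φ.toFun t ρ ∈ S → φ.toFun t ρ = ρ)
    (hinj : ∀ t₁ t₂ : ℝ, |t₁| ≤ δ → |t₂| ≤ δ → ∀ ρ₁ ∈ U, ∀ ρ₂ ∈ U,
      φ.toFun t₁ ρ₁ = φ.toFun t₂ ρ₂ → t₁ = t₂ ∧ ρ₁ = ρ₂)
    (hopen : ∀ V : Set (ℝ × X), IsOpen V →
      ∃ W : Set X, IsOpen W ∧
        (fun p : ℝ × X => φ.toFun p.1 p.2) '' (V ∩ Icc (-δ) δ ×ˢ U) =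
          W ∩ (fun p : ℝ × X => φ.toFun p.1 p.2) '' (Icc (-δ) δ ×ˢ U)) :
    ∃ νperp : Measure X,
      ∀ A : Set X, MeasurableSet A → A ⊆ U → ∀ T : ℝ, 0 < T → T ≤ δ →
        νperp A = ENNReal.ofReal (1 / (2 * T)) *
          μ (⋃ t ∈ Icc (-T) T, φ.toFun t '' A) :=
  stmt_8_general φ μ hinv δ U hinj hopen
end

section
/- Let (M,g) be a Riemannian manifold, H a hypersurface with Fermi normal coordinate x_n and dual fiber coordinate ξ_n, p = |ξ|²_g, and C₁ = sup_{S*M} |H_p ξ_n|. Then along any unit-speed geodesic lift (x(t),ξ(t)) = exp(tH_p)(ζ) one has ẋ_n(t) = 2ξ_n(t) and |ξ_n(t) − ξ_n(0)| ≤ C₁|t|; consequently, every point ζ₀ ∈ S*M with 0 < |x_n(ζ₀)| ≤ (1/(3C₁))·|ξ_n(ζ₀)|² lies on the orbit segment {exp(tH_p)(ζ) : |t| < C₁^{-1}|ξ_n(ζ)|} of some ζ ∈ S*_H M, and the map Ψ(t,ζ) = exp(tH_p)(ζ) is injective on {(t,ζ) ∈ ℝ × S*_H M : |t| < C₁^{-1}|ξ_n(ζ)|}.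 -/
/-!
Along an orbit, `f(s) = xn(φ_s ρ)` has derivative `2 g(s)` with `g(s) = ξn(φ_s ρ)` being
`C₁`-Lipschitz. Between two zeros of `f` Rolle gives a zero of `g`, and the Lipschitz bound then
forces `|g| ≤ C₁ · (distance to that zero)` at both ends; so two times `s` with `f(s) = 0` and
`C₁|s| < |g(s)|` cannot be distinct, which is injectivity. Conversely, near a point with
`|xn| ≤ ξn²/(3C₁)`, on `|s| ≤ ξn/(2C₁)` the speed `2g` stays `≥ ξn`, so `f` changes sign there and
the intermediate value theorem yields a crossing of `H` inside the cone `C₁|s| < |g(s)|`.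
-/

open Set

section RealFunctions

variable {f g : ℝ → ℝ} {C : ℝ}

lemma LipschitzWith.abs_sub_le_toNNReal (hC : 0 ≤ C) (hg : LipschitzWith C.toNNReal g)
    (s t : ℝ) : |g s - g t| ≤ C * |s - t| := by
  simpa [Real.dist_eq, Real.coe_toNNReal _ hC] using hg.dist_le_mul s t

lemma eq_of_hasDerivAt_two_mul_of_lipschitzWith (hC : 0 ≤ C)
    (hf : ∀ t, HasDerivAt f (2 * g t) t) (hg : LipschitzWith C.toNNReal g) {s₁ s₂ : ℝ}
    (hf₁ : f s₁ = 0) (hf₂ : f s₂ = 0) (hs₁ : C * |s₁| < |g s₁|) (hs₂ : C * |s₂| < |g s₂|) :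
    s₁ = s₂ := by
  wlog h : s₁ < s₂ generalizing s₁ s₂
  · rcases (not_lt.mp h).eq_or_lt with h | h
    · exact h.symm
    · exact (this hf₂ hf₁ hs₂ hs₁ h).symm
  exfalso
  obtain ⟨c, ⟨hc₁, hc₂⟩, hfc⟩ := exists_hasDerivAt_eq_zero h
    (fun t _ => (hf t).continuousAt.continuousWithinAt) (hf₁.trans hf₂.symm) (fun t _ => hf t)
  have hgc : g c = 0 := by linarith
  have hg₁ := hg.abs_sub_le_toNNReal hC s₁ c
  have hg₂ := hg.abs_sub_le_toNNReal hC s₂ c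
  rw [hgc, sub_zero, abs_of_neg (sub_neg.mpr hc₁)] at hg₁
  rw [hgc, sub_zero, abs_of_pos (sub_pos.mpr hc₂)] at hg₂
  nlinarith [neg_abs_le s₁, le_abs_self s₂]

lemma exists_zero_of_hasDerivAt_two_mul_of_pos (hC : 0 < C)
    (hf : ∀ t, HasDerivAt f (2 * g t) t) (hg : LipschitzWith C.toNNReal g) (hg₀ : 0 < g 0)
    (hf₀ : |f 0| ≤ 1 / (3 * C) * g 0 ^ 2) :
    ∃ t, f t = 0 ∧ C * |t| < |g t| := by
  set r := g 0 / (2 * C)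
  have hr : 0 < r := by positivity
  have hCr : C * r = g 0 / 2 := by simp only [r]; field_simp
  have hg_lower : ∀ s, g 0 - C * |s| ≤ g s := fun s => by
    have := hg.abs_sub_le_toNNReal hC.le s 0
    rw [sub_zero] at this
    linarith [neg_abs_le (g s - g 0)]
  have hslope : ∀ x ∈ Icc (-r) r, ∀ y ∈ Icc (-r) r, x ≤ y → g 0 * (y - x) ≤ f y - f x := by
    refine (convex_Icc _ _).mul_sub_le_image_sub_of_le_deriv
      (fun t _ => (hf t).continuousAt.continuousWithinAt)
      (fun t _ => (hf t).differentiableAt.differentiableWithinAt) fun t ht => ?_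
    rw [interior_Icc] at ht
    have : |t| ≤ r := abs_le.mpr ⟨ht.1.le, ht.2.le⟩
    rw [(hf t).deriv]
    nlinarith [hg_lower t]
  have hgap : 1 / (3 * C) * g 0 ^ 2 < g 0 * r := by simp only [r]; field_simp; nlinarith
  have hf_neg : f (-r) < 0 := by
    have := hslope (-r) (left_mem_Icc.mpr (by linarith)) 0 ⟨by linarith, hr.le⟩ (by linarith)
    have : f 0 ≤ 1 / (3 * C) * g 0 ^ 2 := (le_abs_self _).trans hf₀
    linarith
  have hf_pos : 0 < f r := by
    have := hslope 0 ⟨by linarith, hr.le⟩ r (right_mem_Icc.mpr (by linarith)) hr.le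
    have : -(1 / (3 * C) * g 0 ^ 2) ≤ f 0 := (neg_le_neg hf₀).trans (neg_abs_le _)
    linarith
  obtain ⟨t, ht, hft⟩ := intermediate_value_Ioo (by linarith)
    (fun s _ => (hf s).continuousAt.continuousWithinAt) ⟨hf_neg, hf_pos⟩
  have ht' : C * |t| < C * r := mul_lt_mul_of_pos_left (abs_lt.mpr ht) hC
  exact ⟨t, hft, by linarith [hg_lower t, le_abs_self (g t)]⟩

lemma exists_zero_of_hasDerivAt_two_mul (hC : 0 < C)
    (hf : ∀ t, HasDerivAt f (2 * g t) t) (hg : LipschitzWith C.toNNReal g) (hg₀ : g 0 ≠ 0)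
    (hf₀ : |f 0| ≤ 1 / (3 * C) * g 0 ^ 2) :
    ∃ t, f t = 0 ∧ C * |t| < |g t| := by
  rcases hg₀.lt_or_gt with hneg | hpos
  · have hf' : ∀ t, HasDerivAt (-f) (2 * (-g) t) t := fun t => by
      simpa only [Pi.neg_apply, mul_neg] using (hf t).neg
    simpa using exists_zero_of_hasDerivAt_two_mul_of_pos hC hf' (lipschitzWith_neg_iff.mpr hg)
      (by simpa using hneg) (by simpa using hf₀)
  · exact exists_zero_of_hasDerivAt_two_mul_of_pos hC hf hg hpos hf₀

end RealFunctions

namespace Flow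

variable {X : Type*} [TopologicalSpace X] (φ : Flow ℝ X) {xn ξn : X → ℝ} {C : ℝ}

lemma toFun_neg_toFun (t : ℝ) (x : X) : φ.toFun (-t) (φ.toFun t x) = x :=
  (φ.toHomeomorph t).symm_apply_apply x

lemma abs_sub_le_of_lipschitzWith (hC : 0 ≤ C) (ζ : X)
    (hLip : LipschitzWith C.toNNReal fun t => ξn (φ.toFun t ζ)) (t : ℝ) :
    |ξn (φ.toFun t ζ) - ξn ζ| ≤ C * |t| := by
  simpa [φ.map_zero_apply] using hLip.abs_sub_le_toNNReal hC t 0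

variable (hderiv : ∀ (ρ : X) (t : ℝ),
      HasDerivAt (fun s : ℝ => xn (φ.toFun s ρ)) (2 * ξn (φ.toFun t ρ)) t)
    (hLip : ∀ ρ : X, LipschitzWith C.toNNReal fun t : ℝ => ξn (φ.toFun t ρ))
include hderiv hLip

lemma eq_of_toFun_eq (hC : 0 ≤ C) {t₁ t₂ : ℝ} {ζ₁ ζ₂ : X}
    (hζ₁ : xn ζ₁ = 0) (hζ₂ : xn ζ₂ = 0) (ht₁ : C * |t₁| < |ξn ζ₁|) (ht₂ : C * |t₂| < |ξn ζ₂|)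
    (h : φ.toFun t₁ ζ₁ = φ.toFun t₂ ζ₂) : t₁ = t₂ ∧ ζ₁ = ζ₂ := by
  set ρ := φ.toFun t₁ ζ₁
  have hρ₁ : φ.toFun (-t₁) ρ = ζ₁ := φ.toFun_neg_toFun t₁ ζ₁
  have hρ₂ : φ.toFun (-t₂) ρ = ζ₂ := h ▸ φ.toFun_neg_toFun t₂ ζ₂
  have ht : -t₁ = -t₂ := eq_of_hasDerivAt_two_mul_of_lipschitzWith hC (hderiv ρ) (hLip ρ)
    (by rwa [hρ₁]) (by rwa [hρ₂]) (by rwa [hρ₁, abs_neg]) (by rwa [hρ₂, abs_neg])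
  rw [neg_inj] at ht
  exact ⟨ht, by rw [← hρ₁, ← hρ₂, ht]⟩

lemma exists_toFun_eq_of_abs_le (hC : 0 < C) {ζ₀ : X} (h₀ : 0 < |xn ζ₀|)
    (h : |xn ζ₀| ≤ 1 / (3 * C) * ξn ζ₀ ^ 2) :
    ∃ ζ t, xn ζ = 0 ∧ C * |t| < |ξn ζ| ∧ φ.toFun t ζ = ζ₀ := by
  have hξ₀ : ξn ζ₀ ≠ 0 := fun hξ => by simp_all
  obtain ⟨t, hxt, hξt⟩ := exists_zero_of_hasDerivAt_two_mul hC (hderiv ζ₀) (hLip ζ₀)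
    (by simpa [φ.map_zero_apply] using hξ₀) (by simpa [φ.map_zero_apply] using h)
  exact ⟨φ.toFun t ζ₀, -t, hxt, by rwa [abs_neg], φ.toFun_neg_toFun t ζ₀⟩

end Flow

theorem stmt_9_general {X : Type*} [MetricSpace X]
    (φ : Flow ℝ X) (xn ξn : X → ℝ)
    (C₁ : ℝ) (hC₁ : 0 < C₁)
    (hderiv : ∀ (ρ : X) (t : ℝ),
      HasDerivAt (fun s : ℝ => xn (φ.toFun s ρ)) (2 * ξn (φ.toFun t ρ)) t)
    (hLip : ∀ ρ : X, LipschitzWith (Real.toNNReal C₁) (fun t : ℝ => ξn (φ.toFun t ρ))) :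
    (∀ (ζ : X) (t : ℝ), |ξn (φ.toFun t ζ) - ξn ζ| ≤ C₁ * |t|) ∧
    (∀ (t₁ t₂ : ℝ) (ζ₁ ζ₂ : X), xn ζ₁ = 0 → xn ζ₂ = 0 →
      |t₁| < C₁⁻¹ * |ξn ζ₁| → |t₂| < C₁⁻¹ * |ξn ζ₂| →
      φ.toFun t₁ ζ₁ = φ.toFun t₂ ζ₂ → t₁ = t₂ ∧ ζ₁ = ζ₂) ∧
    (∀ ζ₀ : X, 0 < |xn ζ₀| → |xn ζ₀| ≤ (1 / (3 * C₁)) * (ξn ζ₀) ^ 2 →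
      ∃ (ζ : X) (t : ℝ), xn ζ = 0 ∧ |t| < C₁⁻¹ * |ξn ζ| ∧ φ.toFun t ζ = ζ₀) := by
  simp only [lt_inv_mul_iff₀ hC₁]
  exact ⟨fun ζ => φ.abs_sub_le_of_lipschitzWith hC₁.le ζ (hLip ζ),
    fun _ _ _ _ => φ.eq_of_toFun_eq hderiv hLip hC₁.le,
    fun _ => φ.exists_toFun_eq_of_abs_le hderiv hLip hC₁⟩

/-- Abstract model of the geodesic flow `exp(tH_p)` on `X = S*M` in Fermi
coordinates near a hypersurface `H = {xn = 0}`: along the flow `ẋn = 2 ξn`, and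
`C₁ = sup_{S*M} |H_p ξn|` bounds the derivative of `ξn` along the flow (encoded as a
Lipschitz bound).  Then: (a) `|ξn(t) − ξn(0)| ≤ C₁|t|` along every orbit;
(b) the map `Ψ(t,ζ) = exp(tH_p)(ζ)` is injective on
`{(t,ζ) ∈ ℝ × S*_H M : |t| < C₁⁻¹ |ξn(ζ)|}`; and (c) every `ζ₀ ∈ S*M` with
`0 < |xn(ζ₀)| ≤ (1/(3C₁)) |ξn(ζ₀)|²` lies on such an orbit segment of some
`ζ ∈ S*_H M`. -/
theorem stmt_9 {X : Type*} [MetricSpace X] [CompactSpace X]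
    (φ : Flow ℝ X) (xn ξn : X → ℝ) (hxn : Continuous xn) (hξn : Continuous ξn)
    (C₁ : ℝ) (hC₁ : 0 < C₁)
    (hderiv : ∀ (ρ : X) (t : ℝ),
      HasDerivAt (fun s : ℝ => xn (φ.toFun s ρ)) (2 * ξn (φ.toFun t ρ)) t)
    (hLip : ∀ ρ : X, LipschitzWith (Real.toNNReal C₁) (fun t : ℝ => ξn (φ.toFun t ρ))) :
    (∀ (ζ : X) (t : ℝ), |ξn (φ.toFun t ζ) - ξn ζ| ≤ C₁ * |t|) ∧
    (∀ (t₁ t₂ : ℝ) (ζ₁ ζ₂ : X), xn ζ₁ = 0 → xn ζ₂ = 0 →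
      |t₁| < C₁⁻¹ * |ξn ζ₁| → |t₂| < C₁⁻¹ * |ξn ζ₂| →
      φ.toFun t₁ ζ₁ = φ.toFun t₂ ζ₂ → t₁ = t₂ ∧ ζ₁ = ζ₂) ∧
    (∀ ζ₀ : X, 0 < |xn ζ₀| → |xn ζ₀| ≤ (1 / (3 * C₁)) * (ξn ζ₀) ^ 2 →
      ∃ (ζ : X) (t : ℝ), xn ζ = 0 ∧ |t| < C₁⁻¹ * |ξn ζ| ∧ φ.toFun t ζ = ζ₀) :=
  stmt_9_general φ xn ξn C₁ hC₁ hderiv hLip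
end

section
/- Let H = {x_n = 0} be a curve in a surface with Fermi coordinates (s,y) and dual coordinates (σ,η), and let p = η² + g^{00}(s,y)σ². Then the quantity P₂(s,y,σ,η) = ∂_y(g^{00}σ²)·a(s,σ) − η·{g^{00}σ², a(s,σ)} restricted to y = 0 equals 2κ_ν(s)σ²·a(s,σ) − 2ση·g^{00}(s,0)·∂_s a(s,σ); in particular P₂ vanishes on S*H = {y = 0, η = 0, σ² = 1} if and only if the geodesic curvature term κ_ν(s)·a(s,σ) vanishes there. -/
open Set Filter Topology

/-- The quantity `P₂(s,y,σ,η) = ∂_y(g00·σ²)·a(s,σ) − η·{g00·σ², a}` for a curve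
`H = {y = 0}` in a surface, where `{F,G} = ∂_σ F ∂_s G − ∂_s F ∂_σ G` is the Poisson
bracket in the tangential variables `(s,σ)`. -/
noncomputable def P2surface (g00 : ℝ → ℝ → ℝ) (a : ℝ → ℝ → ℝ)
    (s y σ η : ℝ) : ℝ :=
  deriv (fun y' => g00 s y' * σ ^ 2) y * a s σ -
    η * (deriv (fun σ' => g00 s y * σ' ^ 2) σ * deriv (fun s' => a s' σ) s -
      deriv (fun s' => g00 s' y * σ ^ 2) s * deriv (fun σ' => a s σ') σ)

/-- For a curve `H = {y = 0}` in a surface with Fermi coordinates `(s,y)`,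
dual coordinates `(σ,η)`, symbol `p = η² + g00(s,y)σ²` and the Fermi expansion
`g00(s,y) = 1 + 2yκ_ν(s) + O(y²)` (encoded by `g00(s,0) = 1` and
`∂_y g00(s,0) = 2κ_ν(s)`), the restriction of `P₂` to `y = 0` equals
`2κ_ν(s)σ²·a(s,σ) − 2ση·g00(s,0)·∂_s a(s,σ)`; in particular on
`S*H = {y = 0, η = 0, σ² = 1}`, `P₂` vanishes iff `κ_ν(s)·a(s,σ)` does. -/
theorem stmt_14 (g00 a : ℝ → ℝ → ℝ) (κν : ℝ → ℝ)
    (hg00 : ContDiff ℝ (⊤ : ℕ∞) (Function.uncurry g00))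
    (ha : ContDiff ℝ (⊤ : ℕ∞) (Function.uncurry a))
    (hg0 : ∀ s, g00 s 0 = 1)
    (hκ : ∀ s, deriv (fun y => g00 s y) 0 = 2 * κν s) :
    (∀ s σ η : ℝ, P2surface g00 a s 0 σ η =
      2 * κν s * σ ^ 2 * a s σ -
        2 * σ * η * g00 s 0 * deriv (fun s' => a s' σ) s) ∧
    (∀ s σ : ℝ, σ ^ 2 = 1 → (P2surface g00 a s 0 σ 0 = 0 ↔ κν s * a s σ = 0)) := by

  have key : ∀ s σ η : ℝ, P2surface g00 a s 0 σ η =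
      2 * κν s * σ ^ 2 * a s σ -
        2 * σ * η * g00 s 0 * deriv (fun s' => a s' σ) s := by
    intro s σ η
    have hgy : Differentiable ℝ (fun y => g00 s y) :=
      by have h := (hg00.differentiable (by simp)).comp ((differentiable_const s).prodMk differentiable_id); exact h
    have h1 : deriv (fun y' => g00 s y' * σ ^ 2) 0 = 2 * κν s * σ ^ 2 := by
      rw [deriv_mul_const (hgy 0), hκ s]
    have h2 : deriv (fun σ' => g00 s 0 * σ' ^ 2) σ = 2 * σ := by
      rw [hg0 s]
      simp [deriv_pow]
    have h3 : deriv (fun s' => g00 s' 0 * σ ^ 2) s = 0 := by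
      have : (fun s' => g00 s' 0 * σ ^ 2) = fun _ => σ ^ 2 := by
        funext s'; rw [hg0 s']; ring
      rw [this, deriv_const]
    unfold P2surface
    rw [h1, h2, h3, hg0 s]
    ring
  refine ⟨key, fun s σ hσ => ?_⟩
  rw [key s σ 0, hσ]
  constructor
  · intro h; nlinarith
  · intro h; nlinarith
end
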